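/- arXiv:2603.19662 — 2 statements merged into one kernel-verified Lean document; each statement's English description precedes it below -/
import Mathlib

section
/- Let n, u, φ : ℝ → ℝ with φ differentiable and 1 + n(x) > 0 for all x. Then the energy density satisfies e[n,u,φ](x) ≥ 0 for every x ∈ ℝ. Moreover, e[n,u,φ](x) = 0 for all x ∈ ℝ if and only if n = 0, u = 0 and φ = 0 identically. -/
open MeasureTheory Real
open scoped ENNReal

noncomputable section

def sech (x : ℝ) : ℝ := (Real.cosh x)⁻¹

def qfun (x : ℝ) : ℝ := Real.exp x - 1

structure IsPressure (p : ℝ → ℝ) : Prop where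
  smooth : ContDiffOn ℝ (⊤ : ℕ∞) p (Set.Ioi (0 : ℝ))
  deriv_pos : ∀ s : ℝ, 0 < s → 0 < deriv p s
  deriv2_nonneg : ∀ s : ℝ, 0 < s → 0 ≤ deriv (deriv p) s

def IsWFor (p w : ℝ → ℝ) : Prop :=
  w 0 = 0 ∧ ∀ s : ℝ, -1 < s → HasDerivAt w (deriv p (1 + s) / (1 + s)) s

def Wfun (w : ℝ → ℝ) (a : ℝ) : ℝ := ∫ s in (0:ℝ)..a, w s

def Rfun (x : ℝ) : ℝ := x * qfun x - ∫ s in (0:ℝ)..x, qfun s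

def energyDensity (w : ℝ → ℝ) (n u φ : ℝ → ℝ) (x : ℝ) : ℝ :=
  (1/2) * (1 + n x) * u x ^ 2 + Wfun w (n x) + (1/2) * (deriv φ x) ^ 2 + Rfun (φ x)

def energy (w : ℝ → ℝ) (n u φ : ℝ → ℝ) : ℝ := ∫ x : ℝ, energyDensity w n u φ x

structure IsEPwSolution (w : ℝ → ℝ) (n u φ : ℝ → ℝ → ℝ) : Prop where
  dens_pos : ∀ t x : ℝ, 0 < 1 + n t x
  reg_n : ContDiff ℝ 1 (Function.uncurry n)
  reg_u : ContDiff ℝ 1 (Function.uncurry u)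
  reg_phi_space : ∀ t : ℝ, ContDiff ℝ 2 (φ t)
  reg_phi_time : ∀ x : ℝ, ContDiff ℝ 1 (fun t => φ t x)
  eq_n : ∀ t x : ℝ, deriv (fun s => n s x) t = - deriv (fun z => (1 + n t z) * u t z) x
  eq_u : ∀ t x : ℝ, deriv (fun s => u s x) t
      = - deriv (fun z => u t z ^ 2 / 2 + w (n t z) + φ t z) x
  eq_phi : ∀ t x : ℝ, - deriv (deriv (φ t)) x + qfun (φ t x) = n t x

def ConservesEnergy (w : ℝ → ℝ) (n u φ : ℝ → ℝ → ℝ) : Prop :=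
  ∀ t₁ t₂ : ℝ, energy w (n t₁) (u t₁) (φ t₁) = energy w (n t₂) (u t₂) (φ t₂)

def L2CompactWith (n u : ℝ → ℝ → ℝ) (y : ℝ → ℝ) : Prop :=
  ∀ ε : ℝ, 0 < ε → ∃ R : ℝ, 0 < R ∧
    ∀ t : ℝ, (∫ x in {x : ℝ | R < |x - y t|}, (n t x ^ 2 + u t x ^ 2)) < ε

lemma rfun_eq (x : ℝ) : Rfun x = x * Real.exp x - Real.exp x + 1 := by
  unfold Rfun qfun
  have h1 : (∫ s in (0:ℝ)..x, (Real.exp s - 1)) = (Real.exp x - Real.exp 0) - (x - 0) * 1 := by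
    rw [intervalIntegral.integral_sub (intervalIntegral.intervalIntegrable_exp) intervalIntegrable_const,
      integral_exp, intervalIntegral.integral_const, smul_eq_mul]
  rw [h1]; simp [Real.exp_zero]; ring

lemma rfun_nonneg (x : ℝ) : 0 ≤ Rfun x := by
  rw [rfun_eq]
  have h := Real.add_one_le_exp (-x)
  rw [Real.exp_neg] at h
  have hx := Real.exp_pos x
  have h2 : (-x + 1) * Real.exp x ≤ 1 := by
    calc (-x + 1) * Real.exp x ≤ (Real.exp x)⁻¹ * Real.exp x :=
          mul_le_mul_of_nonneg_right h hx.le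
      _ = 1 := inv_mul_cancel₀ hx.ne'
  nlinarith

lemma rfun_pos {x : ℝ} (hx : x ≠ 0) : 0 < Rfun x := by
  rw [rfun_eq]
  have h := Real.add_one_lt_exp (neg_ne_zero.mpr hx)
  rw [Real.exp_neg] at h
  have hxp := Real.exp_pos x
  have h2 : (-x + 1) * Real.exp x < 1 := by
    calc (-x + 1) * Real.exp x < (Real.exp x)⁻¹ * Real.exp x :=
          mul_lt_mul_of_pos_right h hxp
      _ = 1 := inv_mul_cancel₀ hxp.ne'
  nlinarith

lemma wfun_props (p w : ℝ → ℝ) (hp : IsPressure p) (hw : IsWFor p w) :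
    ∀ a : ℝ, -1 < a → (0 ≤ Wfun w a ∧ (Wfun w a = 0 ↔ a = 0)) := by
  have hD : ∀ s : ℝ, s ∈ Set.Ioi (-1:ℝ) → HasDerivAt w (deriv p (1 + s) / (1 + s)) s :=
    fun s hs => hw.2 s hs
  have hcont : ContinuousOn w (Set.Ioi (-1:ℝ)) :=
    fun s hs => ((hD s hs).differentiableAt.continuousAt).continuousWithinAt
  have hmono : StrictMonoOn w (Set.Ioi (-1:ℝ)) := by
    apply strictMonoOn_of_deriv_pos (convex_Ioi _) hcont
    intro x hx
    rw [interior_Ioi] at hx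
    rw [(hD x hx).deriv]
    have h1 : (0:ℝ) < 1 + x := by simp only [Set.mem_Ioi] at hx; linarith
    exact div_pos (hp.deriv_pos _ h1) h1
  have hw0 : w 0 = 0 := hw.1
  have hInt : ∀ a : ℝ, -1 < a → IntervalIntegrable w MeasureTheory.volume 0 a := by
    intro a ha
    apply ContinuousOn.intervalIntegrable
    apply hcont.mono
    intro y hy
    simp only [Set.mem_uIcc] at hy
    simp only [Set.mem_Ioi]
    rcases hy with ⟨h1, _⟩ | ⟨h1, _⟩ <;> linarith
  intro a ha
  have hpos : a ≠ 0 → 0 < Wfun w a := by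
    intro hne
    rcases lt_or_gt_of_ne hne with hlt | hgt
    · have : (0:ℝ) < ∫ s in a..(0:ℝ), -w s := by
        apply intervalIntegral.intervalIntegral_pos_of_pos_on
        · exact ((hInt a ha).symm).neg
        · intro s hs
          have hs1 : s ∈ Set.Ioi (-1:ℝ) := by simp; linarith [hs.1]
          have : w s < w 0 := hmono hs1 (by simp) hs.2
          simpa using by linarith [hw0 ▸ this]
        · exact hlt
      rw [intervalIntegral.integral_neg] at this
      unfold Wfun
      rw [intervalIntegral.integral_symm]
      linarith
    · have : (0:ℝ) < ∫ s in (0:ℝ)..a, w s := by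
        apply intervalIntegral.intervalIntegral_pos_of_pos_on (hInt a ha)
        · intro s hs
          have hs1 : s ∈ Set.Ioi (-1:ℝ) := by simp; linarith [hs.1]
          have : w 0 < w s := hmono (by simp) hs1 hs.1
          linarith [hw0 ▸ this]
        · exact hgt
      exact this
  constructor
  · rcases eq_or_ne a 0 with rfl | hne
    · simp [Wfun]
    · exact (hpos hne).le
  · constructor
    · intro h0
      by_contra hne
      exact absurd h0 (ne_of_gt (hpos hne))
    · rintro rfl; simp [Wfun]

theorem energyDensity_nonneg
    (p w : ℝ → ℝ) (hp : IsPressure p) (hw : IsWFor p w)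
    (n u φ : ℝ → ℝ) (hφ : Differentiable ℝ φ) (hn : ∀ x : ℝ, 0 < 1 + n x) :
    (∀ x : ℝ, 0 ≤ energyDensity w n u φ x) ∧
    ((∀ x : ℝ, energyDensity w n u φ x = 0) ↔
      (∀ x : ℝ, n x = 0 ∧ u x = 0 ∧ φ x = 0)) := by
  have hW := wfun_props p w hp hw
  have key : ∀ x : ℝ, 0 ≤ Wfun w (n x) ∧ (Wfun w (n x) = 0 ↔ n x = 0) :=
    fun x => hW (n x) (by linarith [hn x])
  have hterms : ∀ x : ℝ,
      0 ≤ (1/2) * (1 + n x) * u x ^ 2 ∧ 0 ≤ (1/2) * (deriv φ x) ^ 2 ∧ 0 ≤ Rfun (φ x) := by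
    intro x
    refine ⟨?_, by positivity, rfun_nonneg _⟩
    have := hn x
    positivity
  constructor
  · intro x
    unfold energyDensity
    obtain ⟨h1, h2, h3⟩ := hterms x
    linarith [(key x).1]
  · constructor
    · intro h x
      have he := h x
      unfold energyDensity at he
      obtain ⟨h1, h2, h3⟩ := hterms x
      have hWn := (key x).1
      have hu : (1/2) * (1 + n x) * u x ^ 2 = 0 := by linarith
      have hWz : Wfun w (n x) = 0 := by linarith
      have hR : Rfun (φ x) = 0 := by linarith
      refine ⟨(key x).2.mp hWz, ?_, ?_⟩
      · have hnx := hn x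
        have : u x ^ 2 = 0 := by
          by_contra hne
          have : 0 < u x ^ 2 := lt_of_le_of_ne (sq_nonneg _) (Ne.symm hne)
          nlinarith
        exact pow_eq_zero_iff (by norm_num) |>.mp this
      · by_contra hne
        exact absurd hR (ne_of_gt (rfun_pos hne))
    · intro h x
      have hφ0 : φ = fun _ => 0 := funext fun y => (h y).2.2
      unfold energyDensity
      rw [(h x).1, (h x).2.1, (h x).2.2, hφ0, deriv_const]
      simp [Wfun, rfun_eq]
end
end

section
/- Let (n,u,φ) be a classical solution of the 1D Euler–Poisson system (EPw). Then the momentum density m = n u satisfies the pointwise identity −∂ₜm = ∂ₓ( (1/2 + n)u² + S(n) − (1/2)(∂ₓφ)² + Q(φ) ), where S(n) = n w(n) − W(n) and Q(φ) = ∫₀^φ q(s) ds = e^φ − 1 − φ. -/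
open MeasureTheory Real
open scoped ENNReal

noncomputable section

theorem momentum_density_flux_identity
    (p w : ℝ → ℝ) (hp : IsPressure p) (hw : IsWFor p w)
    (n u φ : ℝ → ℝ → ℝ) (hsol : IsEPwSolution w n u φ) :
    ∀ t x : ℝ,
      - deriv (fun s => n s x * u s x) t
        = deriv (fun z =>
            (1/2 + n t z) * u t z ^ 2 + (n t z * w (n t z) - Wfun w (n t z))
              - (1/2) * (deriv (φ t) z) ^ 2 + (Real.exp (φ t z) - 1 - φ t z)) x := by
  obtain ⟨dens_pos, reg_n, reg_u, reg_phi_space, reg_phi_time, eq_n, eq_u, eq_phi⟩ := hsol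
  intro t x
  -- spatial differentiability of n and u
  have hns : ∀ z : ℝ, DifferentiableAt ℝ (fun z => n t z) z := by
    intro z
    have h : DifferentiableAt ℝ (Function.uncurry n ∘ fun z : ℝ => (t, z)) z :=
      DifferentiableAt.comp z (reg_n.differentiable (by norm_num) (t, z))
        (DifferentiableAt.prodMk (differentiableAt_const t) differentiableAt_id)
    exact h
  have hus : ∀ z : ℝ, DifferentiableAt ℝ (fun z => u t z) z := by
    intro z
    have h : DifferentiableAt ℝ (Function.uncurry u ∘ fun z : ℝ => (t, z)) z :=
      DifferentiableAt.comp z (reg_u.differentiable (by norm_num) (t, z))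
        (DifferentiableAt.prodMk (differentiableAt_const t) differentiableAt_id)
    exact h
  -- time differentiability of n and u
  have hnt : DifferentiableAt ℝ (fun s => n s x) t := by
    have h : DifferentiableAt ℝ (Function.uncurry n ∘ fun s : ℝ => (s, x)) t :=
      DifferentiableAt.comp t (reg_n.differentiable (by norm_num) (t, x))
        (DifferentiableAt.prodMk differentiableAt_id (differentiableAt_const x))
    exact h
  have hut : DifferentiableAt ℝ (fun s => u s x) t := by
    have h : DifferentiableAt ℝ (Function.uncurry u ∘ fun s : ℝ => (s, x)) t :=
      DifferentiableAt.comp t (reg_u.differentiable (by norm_num) (t, x))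
        (DifferentiableAt.prodMk differentiableAt_id (differentiableAt_const x))
    exact h
  set nx := deriv (fun z => n t z) x with hnxdef
  set ux := deriv (fun z => u t z) x with huxdef
  have hnx : HasDerivAt (fun z => n t z) nx x := (hns x).hasDerivAt
  have hux : HasDerivAt (fun z => u t z) ux x := (hus x).hasDerivAt
  -- φ facts
  have hφ2' : ContDiff ℝ ((1:ℕ) + 1) (φ t) := by exact_mod_cast reg_phi_space t
  have hφ1 : HasDerivAt (φ t) (deriv (φ t) x) x :=
    ((hφ2'.differentiable (by norm_num)) x).hasDerivAt
  have hφ2 : HasDerivAt (deriv (φ t)) (deriv (deriv (φ t)) x) x :=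
    ((((contDiff_succ_iff_deriv.mp hφ2').2.2).differentiable (by norm_num)) x).hasDerivAt
  set px := deriv (φ t) x
  set pxx := deriv (deriv (φ t)) x
  -- w facts
  have hNpos := dens_pos t x
  have hwn : HasDerivAt w (deriv p (1 + n t x) / (1 + n t x)) (n t x) :=
    hw.2 (n t x) (by linarith)
  set wd := deriv p (1 + n t x) / (1 + n t x)
  have hwcont : ContinuousOn w (Set.Ioi (-1 : ℝ)) := fun s hs =>
    ((hw.2 s hs).continuousAt).continuousWithinAt
  have hmemI : Set.uIcc (0 : ℝ) (n t x) ⊆ Set.Ioi (-1 : ℝ) := by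
    intro s hs
    rcases Set.mem_uIcc.mp hs with ⟨h, _⟩ | ⟨h, _⟩ <;>
      simp only [Set.mem_Ioi] <;> linarith
  have hint : IntervalIntegrable w MeasureTheory.volume 0 (n t x) :=
    (hwcont.mono hmemI).intervalIntegrable
  have hmeas : StronglyMeasurableAtFilter w (nhds (n t x)) :=
    hwcont.stronglyMeasurableAtFilter isOpen_Ioi (n t x) (by simp; linarith)
  have hW : HasDerivAt (Wfun w) (w (n t x)) (n t x) :=
    intervalIntegral.integral_hasDerivAt_right hint hmeas hwn.continuousAt
  -- derivatives of composite pieces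
  have hwcomp : HasDerivAt (fun z => w (n t z)) (wd * nx) x := hwn.comp x hnx
  have hWcomp : HasDerivAt (fun z => Wfun w (n t z)) (w (n t x) * nx) x := hW.comp x hnx
  have hu2 : HasDerivAt (fun z => u t z ^ 2) (2 * u t x * ux) x := by
    simpa using hux.fun_pow 2
  have hp2 : HasDerivAt (fun z => deriv (φ t) z ^ 2) (2 * px * pxx) x := by
    simpa using hφ2.fun_pow 2
  have hexp : HasDerivAt (fun z => Real.exp (φ t z)) (Real.exp (φ t x) * px) x := hφ1.exp
  -- RHS derivative
  have hRHS : HasDerivAt (fun z =>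
      (1/2 + n t z) * u t z ^ 2 + (n t z * w (n t z) - Wfun w (n t z))
        - (1/2) * (deriv (φ t) z) ^ 2 + (Real.exp (φ t z) - 1 - φ t z))
      ((nx * u t x ^ 2 + (1/2 + n t x) * (2 * u t x * ux))
        + (nx * w (n t x) + n t x * (wd * nx) - w (n t x) * nx)
        - (1/2) * (2 * px * pxx) + (Real.exp (φ t x) * px - 0 - px)) x := by
    have h := ((((((hasDerivAt_const x (1/2 : ℝ)).fun_add hnx).fun_mul hu2).fun_add
      ((hnx.fun_mul hwcomp).fun_sub hWcomp)).fun_sub (hp2.const_mul (1/2))).fun_add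
      ((hexp.fun_sub (hasDerivAt_const x (1:ℝ))).fun_sub hφ1))
    convert h using 1
    · rfl
    · rfl
    ring
  rw [hRHS.deriv]
  -- LHS time derivative
  have hm : deriv (fun s => n s x * u s x) t
      = deriv (fun s => n s x) t * u t x + n t x * deriv (fun s => u s x) t :=
    (hnt.hasDerivAt.mul hut.hasDerivAt).deriv
  have hA : deriv (fun z => (1 + n t z) * u t z) x = nx * u t x + (1 + n t x) * ux := by
    have : HasDerivAt (fun z => (1 + n t z) * u t z)
        ((0 + nx) * u t x + (1 + n t x) * ux) x :=
      ((hasDerivAt_const x (1:ℝ)).add hnx).mul hux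
    simpa using this.deriv
  have hB : deriv (fun z => u t z ^ 2 / 2 + w (n t z) + φ t z) x
      = 2 * u t x * ux / 2 + wd * nx + px :=
    (((hu2.div_const 2).add hwcomp).add hφ1).deriv
  rw [hm, eq_n t x, eq_u t x, hA, hB]
  have hphi : Real.exp (φ t x) - 1 = n t x + pxx := by
    have h := eq_phi t x
    simp only [qfun] at h
    linarith
  linear_combination (-px) * hphi
end
end
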